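/- For all j_c > 0, γ > 0, every e ∈ ℝ³ with e ≠ 0, and every p ∈ ℝ³, one has the γ-independent bound |e| · |ψ_γ(e) p| ≤ 2 j_c |p|. -/

import Mathlib

/-!
Since `max_γ{1, x} ≥ max{1, x}` and `0 ≤ c_γ ≤ 1`, we have `j_c γ |e| / max_γ{1, γ|e|} ≤ j_c` and
`γ c_γ(e) |e| / max_γ{1, γ|e|} ≤ 1`. Hence each of the two terms of `ψ_γ(e) p`, multiplied by
`|e|`, has norm at most `j_c |p|`, by Cauchy–Schwarz for the rank-one term.
-/

open scoped RealInnerProductSpace Topology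

/-- Moreau-Yosida regularization of the max-function `x ↦ max{1, x}`. -/
noncomputable def maxReg (γ x : ℝ) : ℝ :=
  if 1 / (2 * γ) ≤ x - 1 then x
  else if x - 1 ≤ -(1 / (2 * γ)) then 1
  else 1 + γ / 2 * (x - 1 + 1 / (2 * γ)) ^ 2

abbrev E3 := EuclideanSpace ℝ (Fin 3)

/-- The regularized dual-variable map `Λ_γ(e) = j_c γ e / max_γ{1, γ|e|}`. -/
noncomputable def Lam (jc γ : ℝ) (e : E3) : E3 :=
  (jc * γ / maxReg γ (γ * ‖e‖)) • e

/-- The coefficient `c_γ(e)` arising in the derivative of `Λ_γ`. -/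
noncomputable def cReg (γ : ℝ) (e : E3) : ℝ :=
  if 1 + 1 / (2 * γ) ≤ γ * ‖e‖ then 1
  else if |γ * ‖e‖ - 1| < 1 / (2 * γ) then γ * (γ * ‖e‖ - 1 + 1 / (2 * γ))
  else 0

/-- The matrix `ψ_γ(e)` applied to a vector `v`, where `(e ⊗ Λ_γ(e)) v = (Λ_γ(e) ⬝ v) e`. -/
noncomputable def psi (jc γ : ℝ) (e v : E3) : E3 :=
  (jc * γ / maxReg γ (γ * ‖e‖)) • v
    - ((γ * cReg γ e / (maxReg γ (γ * ‖e‖) * ‖e‖)) * ⟪Lam jc γ e, v⟫) • e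

section maxReg

variable {γ : ℝ}

lemma one_le_maxReg (hγ : 0 < γ) (x : ℝ) : 1 ≤ maxReg γ x := by
  unfold maxReg
  split_ifs with h₁ h₂
  · linarith [one_div_pos.2 (by linarith : (0 : ℝ) < 2 * γ)]
  · exact le_rfl
  · nlinarith [sq_nonneg (x - 1 + 1 / (2 * γ))]

lemma maxReg_pos (hγ : 0 < γ) (x : ℝ) : 0 < maxReg γ x :=
  one_pos.trans_le (one_le_maxReg hγ x)

lemma le_maxReg (hγ : 0 < γ) (x : ℝ) : x ≤ maxReg γ x := by
  unfold maxReg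
  split_ifs with h₁ h₂
  · exact le_rfl
  · linarith [one_div_pos.2 (by linarith : (0 : ℝ) < 2 * γ)]
  · have hsq : γ / 2 * (x - 1 + 1 / (2 * γ)) ^ 2 - (x - 1)
        = γ / 2 * (x - 1 - 1 / (2 * γ)) ^ 2 := by
      field_simp
      ring
    nlinarith [sq_nonneg (x - 1 - 1 / (2 * γ))]

lemma div_maxReg_le_one (hγ : 0 < γ) (x : ℝ) : x / maxReg γ x ≤ 1 :=
  div_le_one_of_le₀ (le_maxReg hγ x) (maxReg_pos hγ x).le

lemma cReg_nonneg (hγ : 0 < γ) (e : E3) : 0 ≤ cReg γ e := by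
  unfold cReg
  split_ifs with h₁ h₂
  · exact zero_le_one
  · nlinarith [(abs_lt.1 h₂).1]
  · exact le_rfl

lemma cReg_le_one (hγ : 0 < γ) (e : E3) : cReg γ e ≤ 1 := by
  unfold cReg
  split_ifs with h₁ h₂
  · exact le_rfl
  · have hδ : γ * (1 / (2 * γ)) = 1 / 2 := by field_simp
    nlinarith [(abs_lt.1 h₂).2]
  · exact zero_le_one

end maxReg

lemma norm_mul_norm_smul_sub_inner_smul_le {F : Type*} [NormedAddCommGroup F]
    [InnerProductSpace ℝ F] {a b κ : ℝ} (e p : F) (ha : 0 ≤ a) (hae : a * ‖e‖ ≤ κ)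
    (hb : 0 ≤ b) (hbe : b * ‖e‖ ≤ 1) :
    ‖e‖ * ‖a • p - (b / ‖e‖ * ⟪a • e, p⟫) • e‖ ≤ 2 * κ * ‖p‖ := by
  have hinner : |⟪a • e, p⟫| ≤ a * ‖e‖ * ‖p‖ := by
    rw [real_inner_smul_left, abs_mul, abs_of_nonneg ha, mul_assoc]
    exact mul_le_mul_of_nonneg_left (abs_real_inner_le_norm e p) ha
  have hfirst : ‖e‖ * ‖a • p‖ ≤ κ * ‖p‖ := by
    rw [norm_smul, Real.norm_of_nonneg ha, ← mul_assoc, mul_comm ‖e‖]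
    exact mul_le_mul_of_nonneg_right hae (norm_nonneg p)
  have hsecond : ‖e‖ * ‖(b / ‖e‖ * ⟪a • e, p⟫) • e‖ ≤ κ * ‖p‖ :=
    calc ‖e‖ * ‖(b / ‖e‖ * ⟪a • e, p⟫) • e‖
        = (‖e‖ / ‖e‖) * (b * ‖e‖) * |⟪a • e, p⟫| := by
          rw [norm_smul, Real.norm_eq_abs, abs_mul, abs_div, abs_norm, abs_of_nonneg hb]
          ring
      _ ≤ 1 * 1 * (a * ‖e‖ * ‖p‖) := by
          gcongr
          exact div_self_le_one _
      _ ≤ κ * ‖p‖ := by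
          rw [one_mul, one_mul]
          exact mul_le_mul_of_nonneg_right hae (norm_nonneg p)
  calc ‖e‖ * ‖a • p - (b / ‖e‖ * ⟪a • e, p⟫) • e‖
      ≤ ‖e‖ * ‖a • p‖ + ‖e‖ * ‖(b / ‖e‖ * ⟪a • e, p⟫) • e‖ := by
        rw [← mul_add]
        exact mul_le_mul_of_nonneg_left (norm_sub_le _ _) (norm_nonneg e)
    _ ≤ 2 * κ * ‖p‖ := by linarith

theorem psi_gamma_independent_bound_general (jc γ : ℝ) (hjc : 0 < jc) (hγ : 0 < γ) (e : E3)
    (p : E3) : ‖e‖ * ‖psi jc γ e p‖ ≤ 2 * jc * ‖p‖ := by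
  set M := maxReg γ (γ * ‖e‖)
  have hM : 0 < M := maxReg_pos hγ _
  have hratio : γ * ‖e‖ / M ≤ 1 := div_maxReg_le_one hγ _
  have hpsi : psi jc γ e p
      = (jc * γ / M) • p - (γ * cReg γ e / M / ‖e‖ * ⟪(jc * γ / M) • e, p⟫) • e := by
    rw [psi, Lam, div_div]
  rw [hpsi]
  refine norm_mul_norm_smul_sub_inner_smul_le e p (by positivity) ?_
    (div_nonneg (mul_nonneg hγ.le (cReg_nonneg hγ e)) hM.le) ?_
  · calc jc * γ / M * ‖e‖ = jc * (γ * ‖e‖ / M) := by ring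
      _ ≤ jc * 1 := mul_le_mul_of_nonneg_left hratio hjc.le
      _ = jc := mul_one jc
  · calc γ * cReg γ e / M * ‖e‖ = cReg γ e * (γ * ‖e‖ / M) := by ring
      _ ≤ 1 * 1 := mul_le_mul (cReg_le_one hγ e) hratio (by positivity) zero_le_one
      _ = 1 := mul_one 1

/-- γ-independent bound: `‖e‖ ⬝ ‖ψ_γ(e) p‖ ≤ 2 j_c ‖p‖` for e ≠ 0. -/
theorem psi_gamma_independent_bound (jc γ : ℝ) (hjc : 0 < jc) (hγ : 0 < γ) (e : E3)
    (he : e ≠ 0) (p : E3) : ‖e‖ * ‖psi jc γ e p‖ ≤ 2 * jc * ‖p‖ :=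
  psi_gamma_independent_bound_general jc γ hjc hγ e p
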